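/- arXiv:1811.03744 — 3 statements merged into one kernel-verified Lean document; each statement's English description precedes it below -/
import Mathlib

section
/- If f is a probability density on ℝ^d with shift-invariance SI(f,κ) ≤ c for all κ > 0, and B ⊆ ℝ^d is a measurable set with ∫_B f ≥ 1 - δ for some δ < 1/2, then the conditional density f_B (equal to f(x)/∫_B f for x ∈ B and 0 elsewhere) satisfies SI(f_B, κ) ≤ 4δ/κ + 2c for all κ > 0, where SI(g,κ) = sup over unit vectors v of (1/κ)·sup_{κ' ∈ [0,κ]} ∫ |g(x + κ'v) − g(x)| dx. -/
open MeasureTheory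

/-- Conditioning a shift-invariant density on a high-mass set degrades
shift-invariance by at most `4δ/κ + 2c`. -/
theorem conditioned_density_shift_invariance
    {d : ℕ} (f : EuclideanSpace ℝ (Fin d) → ℝ) (c δ : ℝ)
    (hf0 : ∀ x, 0 ≤ f x) (hf1 : ∫ x, f x = 1)
    (B : Set (EuclideanSpace ℝ (Fin d))) (hB : MeasurableSet B)
    (hδ : δ < 1/2)
    (hmass : 1 - δ ≤ ∫ x in B, f x)
    (fB : EuclideanSpace ℝ (Fin d) → ℝ)
    (hfB : ∀ x, fB x = B.indicator f x / ∫ y in B, f y)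
    (hSI : ∀ v : EuclideanSpace ℝ (Fin d), ‖v‖ = 1 → ∀ κ > (0:ℝ),
      ∀ κ' ∈ Set.Icc (0:ℝ) κ, ∫ x, |f (x + κ' • v) - f x| ≤ c * κ) :
    ∀ v : EuclideanSpace ℝ (Fin d), ‖v‖ = 1 → ∀ κ > (0:ℝ),
      ∀ κ' ∈ Set.Icc (0:ℝ) κ,
        ∫ x, |fB (x + κ' • v) - fB x| ≤ (4 * δ / κ + 2 * c) * κ := by
  intro v hv κ hκ κ' hκ'
  set w := κ' • v with hw
  set I := ∫ x in B, f x with hIdef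
  have hf_int : Integrable f := by
    by_contra h
    rw [integral_undef h] at hf1
    norm_num at hf1
  have hIpos : (1:ℝ)/2 < I := by linarith
  have hIle1 : I ≤ 1 := by
    rw [hIdef, ← hf1]
    exact setIntegral_le_integral hf_int (Filter.Eventually.of_forall fun x => hf0 x)
  have hδ0 : 0 ≤ δ := by linarith
  set g : EuclideanSpace ℝ (Fin d) → ℝ := B.indicator f with hgdef
  set q : EuclideanSpace ℝ (Fin d) → ℝ := Bᶜ.indicator f with hqdef
  have hg_int : Integrable g := hf_int.indicator hB
  have hq_int : Integrable q := hf_int.indicator hB.compl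
  have hq0 : ∀ x, 0 ≤ q x := fun x => Set.indicator_nonneg (fun y _ => hf0 y) x
  have hgq : ∀ x, g x = f x - q x := by
    intro x
    have := Set.indicator_self_add_compl B f
    have h2 : g x + q x = f x := by
      rw [hgdef, hqdef]
      exact congrFun this x
    linarith
  -- integral of q
  have hq_val : ∫ x, q x = 1 - I := by
    have hsum : I + ∫ x in Bᶜ, f x = ∫ x, f x := integral_add_compl hB hf_int
    rw [hqdef, integral_indicator hB.compl]
    rw [hf1] at hsum
    linarith
  have hq_le : ∫ x, q x ≤ δ := by rw [hq_val]; linarith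
  -- shifted integrability
  have hg_sh : Integrable (fun x => g (x + w)) := hg_int.comp_add_right w
  have hq_sh : Integrable (fun x => q (x + w)) := hq_int.comp_add_right w
  have hf_sh : Integrable (fun x => f (x + w)) := hf_int.comp_add_right w
  have hfd_int : Integrable (fun x => |f (x + w) - f x|) := (hf_sh.sub hf_int).abs
  have hgd_int : Integrable (fun x => |g (x + w) - g x|) := (hg_sh.sub hg_int).abs
  have hq_sh_val : ∫ x, q (x + w) = ∫ x, q x := integral_add_right_eq_self q w
  -- pointwise bound
  have hpt : ∀ x, |g (x + w) - g x| ≤ |f (x + w) - f x| + (q (x + w) + q x) := by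
    intro x
    rw [hgq, hgq]
    have h1 : f (x + w) - q (x + w) - (f x - q x)
        = (f (x + w) - f x) - (q (x + w) - q x) := by ring
    rw [h1]
    calc |(f (x + w) - f x) - (q (x + w) - q x)|
        ≤ |f (x + w) - f x| + |q (x + w) - q x| := abs_sub _ _
      _ ≤ |f (x + w) - f x| + (q (x + w) + q x) := by
          have := abs_sub (q (x + w)) (q x)
          have h2 : |q (x + w)| = q (x + w) := abs_of_nonneg (hq0 _)
          have h3 : |q x| = q x := abs_of_nonneg (hq0 _)
          nlinarith [abs_sub_abs_le_abs_sub (q (x+w)) (q x), abs_sub (q (x+w)) (q x)]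
  have hgd_bound : ∫ x, |g (x + w) - g x| ≤ c * κ + 2 * δ := by
    have hmono : ∫ x, |g (x + w) - g x|
        ≤ ∫ x, (|f (x + w) - f x| + (q (x + w) + q x)) :=
      integral_mono hgd_int (hfd_int.add (hq_sh.add hq_int)) hpt
    have h2 : ∫ x, (q (x + w) + q x) = (∫ x, q (x + w)) + ∫ x, q x :=
      integral_add hq_sh hq_int
    have h1 : ∫ x, (|f (x + w) - f x| + (q (x + w) + q x))
        = (∫ x, |f (x + w) - f x|) + ∫ x, (q (x + w) + q x) :=
      integral_add hfd_int (hq_sh.add hq_int)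
    have hSIb := hSI v hv κ hκ κ' hκ'
    rw [h1, h2, hq_sh_val] at hmono
    linarith
  -- rewrite fB integral
  have heq : ∫ x, |fB (x + w) - fB x| = (∫ x, |g (x + w) - g x|) / I := by
    rw [← integral_div]
    congr 1
    funext x
    rw [hfB, hfB, div_sub_div_same, abs_div,
      abs_of_pos (by linarith : (0:ℝ) < I)]
  have hnn : 0 ≤ c * κ + 2 * δ := by
    have := hSI v hv κ hκ κ' hκ'
    have h0 : 0 ≤ ∫ x, |f (x + w) - f x| := integral_nonneg fun x => abs_nonneg _
    linarith
  have hfinal : ∫ x, |fB (x + w) - fB x| ≤ 2 * (c * κ + 2 * δ) := by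
    rw [heq]
    rw [div_le_iff₀ (by linarith : (0:ℝ) < I)]
    nlinarith
  have hrhs : (4 * δ / κ + 2 * c) * κ = 2 * (c * κ + 2 * δ) := by
    field_simp
    ring
  linarith [hfinal, hrhs.ge, hrhs.le]
end

section
/- Let ℓ : ℝ → ℝ≥0 be a unimodal measurable function (i.e. there exists z ∈ ℝ such that ℓ is nondecreasing on (−∞, z] and nonincreasing on [z, ∞)) with finite supremum. Then for any h > 0, ∫_ℝ |ℓ(t) − ℓ(t + h)| dt ≤ 3h · sup_{t∈ℝ} ℓ(t). -/
/-!
Split `ℓ` into the nondecreasing part `ℓ (min t z)` and the nonincreasing part `ℓ (max t z)`,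
both with values in `[0, sup ℓ]`; pointwise, `|ℓ t - ℓ (t + h)|` is at most the sum of the
increases over `[t, t + h]` of the first part and of minus the second (both nonnegative).
For a monotone `g` with values in `[m, M]` the integral of `g (t + h) - g t` over any window
`[a, b]` telescopes to `∫ in b..b+h, g - ∫ in a..a+h, g ≤ h * (M - m)`, so each part
contributes at most `h * sup ℓ`, and in fact `2 * h * sup ℓ` bounds the whole integral.
-/

open MeasureTheory Set Filter fwdDiff

namespace Monotone

variable {g : ℝ → ℝ} {m M h : ℝ}

theorem comp_add_const (hg : Monotone g) (h : ℝ) : Monotone fun t => g (t + h) :=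
  fun _ _ hst => hg (by gcongr)

theorem intervalIntegrable_fwdDiff (hg : Monotone g) (a b : ℝ) :
    IntervalIntegrable (Δ_[h] g) volume a b :=
  (hg.comp_add_const h).intervalIntegrable.sub hg.intervalIntegrable

theorem intervalIntegral_fwdDiff_le (hg : Monotone g) (hm : ∀ t, m ≤ g t) (hM : ∀ t, g t ≤ M)
    (hh : 0 ≤ h) (a b : ℝ) : ∫ t in a..b, Δ_[h] g t ≤ h * (M - m) := by
  have hint {c d : ℝ} : IntervalIntegrable g volume c d := hg.intervalIntegrable
  have hupper : ∫ t in b..b + h, g t ≤ h * M := by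
    simpa using intervalIntegral.integral_mono_on (a := b) (b := b + h) (by linarith) hint
      intervalIntegrable_const fun t _ => hM t
  have hlower : h * m ≤ ∫ t in a..a + h, g t := by
    simpa using intervalIntegral.integral_mono_on (a := a) (b := a + h) (by linarith)
      intervalIntegrable_const hint fun t _ => hm t
  calc ∫ t in a..b, Δ_[h] g t
      = (∫ t in a + h..b + h, g t) - ∫ t in a..b, g t := by
        rw [← intervalIntegral.integral_comp_add_right, ← intervalIntegral.integral_sub
          (hg.comp_add_const h).intervalIntegrable hint]
        rfl
    _ = (∫ t in b..b + h, g t) - ∫ t in a..a + h, g t :=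
        intervalIntegral.integral_interval_sub_interval_comm' hint hint hint
    _ ≤ h * (M - m) := by linarith

theorem fwdDiff_nonneg (hg : Monotone g) (hh : 0 ≤ h) (t : ℝ) : 0 ≤ Δ_[h] g t :=
  sub_nonneg.2 (hg (le_add_of_nonneg_right hh))

theorem integrable_fwdDiff (hg : Monotone g) (hm : ∀ t, m ≤ g t) (hM : ∀ t, g t ≤ M)
    (hh : 0 ≤ h) : Integrable (Δ_[h] g) := by
  refine integrable_of_intervalIntegral_norm_bounded (h * (M - m))
    (fun n : ℕ => (hg.intervalIntegrable_fwdDiff (-n) n).1) ?_ tendsto_natCast_atTop_atTop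
    (Eventually.of_forall fun n => ?_)
  · exact tendsto_neg_atTop_atBot.comp tendsto_natCast_atTop_atTop
  · simpa only [Real.norm_of_nonneg (hg.fwdDiff_nonneg hh _)]
      using hg.intervalIntegral_fwdDiff_le hm hM hh (-n) n

theorem integral_fwdDiff_le (hg : Monotone g) (hm : ∀ t, m ≤ g t) (hM : ∀ t, g t ≤ M)
    (hh : 0 ≤ h) : ∫ t, Δ_[h] g t ≤ h * (M - m) :=
  le_of_tendsto' (intervalIntegral_tendsto_integral (hg.integrable_fwdDiff hm hM hh)
    tendsto_neg_atTop_atBot tendsto_id) fun n => hg.intervalIntegral_fwdDiff_le hm hM hh (-n) n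

end Monotone

theorem MonotoneOn.monotone_comp_min {f : ℝ → ℝ} {z : ℝ} (hf : MonotoneOn f (Iic z)) :
    Monotone fun t => f (min t z) :=
  fun _ _ hst =>
    hf (mem_Iic.2 (min_le_right _ _)) (mem_Iic.2 (min_le_right _ _)) (min_le_min_right z hst)

theorem AntitoneOn.antitone_comp_max {f : ℝ → ℝ} {z : ℝ} (hf : AntitoneOn f (Ici z)) :
    Antitone fun t => f (max t z) :=
  fun _ _ hst =>
    hf (mem_Ici.2 (le_max_right _ _)) (mem_Ici.2 (le_max_right _ _)) (max_le_max_right z hst)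

theorem abs_sub_le_fwdDiff_of_unimodal {f : ℝ → ℝ} {z h : ℝ} (hmono : MonotoneOn f (Iic z))
    (hanti : AntitoneOn f (Ici z)) (hh : 0 ≤ h) (t : ℝ) :
    |f t - f (t + h)| ≤ Δ_[h] (fun s => f (min s z)) t + Δ_[h] (fun s => -f (max s z)) t := by
  simp only [fwdDiff]
  rcases le_total (t + h) z with hleft | hright
  · have hle : f t ≤ f (t + h) := hmono (mem_Iic.2 (by linarith)) hleft (by linarith)
    rw [min_eq_left hleft, min_eq_left (by linarith), max_eq_right hleft,
      max_eq_right (by linarith), abs_sub_comm, abs_of_nonneg (by linarith)]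
    linarith
  rcases le_total z t with hright' | hmid
  · have hle : f (t + h) ≤ f t := hanti hright' (mem_Ici.2 (by linarith)) (by linarith)
    rw [min_eq_right hright', min_eq_right (by linarith), max_eq_left hright',
      max_eq_left (by linarith), abs_of_nonneg (by linarith)]
    linarith
  · have hzt : f t ≤ f z := hmono hmid self_mem_Iic hmid
    have hzth : f (t + h) ≤ f z := hanti self_mem_Ici hright hright
    rw [min_eq_right hright, min_eq_left hmid, max_eq_right hmid, max_eq_left hright, abs_le]
    constructor <;> linarith

theorem unimodal_shift_L1_bound_general
    (ℓ : ℝ → ℝ) (hℓ0 : ∀ t, 0 ≤ ℓ t)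
    (z : ℝ) (hmono : MonotoneOn ℓ (Set.Iic z)) (hanti : AntitoneOn ℓ (Set.Ici z))
    (hbdd : BddAbove (Set.range ℓ))
    (h : ℝ) (hh : 0 < h) :
    ∫ t, |ℓ t - ℓ (t + h)| ≤ 3 * h * sSup (Set.range ℓ) := by
  set S := sSup (Set.range ℓ)
  set rise : ℝ → ℝ := fun s => ℓ (min s z)
  set fall : ℝ → ℝ := fun s => -ℓ (max s z)
  have hS (t : ℝ) : ℓ t ≤ S := le_csSup hbdd (mem_range_self t)
  have hrise : Monotone rise := hmono.monotone_comp_min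
  have hfall : Monotone fall := hanti.antitone_comp_max.neg
  have hrise_lo (t : ℝ) : 0 ≤ rise t := hℓ0 _
  have hrise_hi (t : ℝ) : rise t ≤ S := hS _
  have hfall_lo (t : ℝ) : -S ≤ fall t := neg_le_neg (hS _)
  have hfall_hi (t : ℝ) : fall t ≤ 0 := neg_nonpos.2 (hℓ0 _)
  have hrise_int := hrise.integrable_fwdDiff hrise_lo hrise_hi hh.le
  have hfall_int := hfall.integrable_fwdDiff hfall_lo hfall_hi hh.le
  calc ∫ t, |ℓ t - ℓ (t + h)|
      ≤ ∫ t, (Δ_[h] rise t + Δ_[h] fall t) :=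
        integral_mono_of_nonneg (.of_forall fun t => abs_nonneg _) (hrise_int.add hfall_int)
          (.of_forall (abs_sub_le_fwdDiff_of_unimodal hmono hanti hh.le))
    _ = (∫ t, Δ_[h] rise t) + ∫ t, Δ_[h] fall t := integral_add hrise_int hfall_int
    _ ≤ h * (S - 0) + h * (0 - -S) :=
        add_le_add (hrise.integral_fwdDiff_le hrise_lo hrise_hi hh.le)
          (hfall.integral_fwdDiff_le hfall_lo hfall_hi hh.le)
    _ ≤ 3 * h * S := by nlinarith [hrise_lo z, hrise_hi z]

/-- For a nonnegative unimodal function `ℓ` on `ℝ` with bounded range,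
`∫ |ℓ(t) − ℓ(t+h)| dt ≤ 3h · sup ℓ`. -/
theorem unimodal_shift_L1_bound
    (ℓ : ℝ → ℝ) (hmeas : Measurable ℓ) (hℓ0 : ∀ t, 0 ≤ ℓ t)
    (z : ℝ) (hmono : MonotoneOn ℓ (Set.Iic z)) (hanti : AntitoneOn ℓ (Set.Ici z))
    (hbdd : BddAbove (Set.range ℓ))
    (h : ℝ) (hh : 0 < h) :
    ∫ t, |ℓ t - ℓ (t + h)| ≤ 3 * h * sSup (Set.range ℓ) :=
  unimodal_shift_L1_bound_general ℓ hℓ0 z hmono hanti hbdd h hh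
end

section
/- Let f be the piecewise-constant density on [−T,T)^d ⊂ ℝ^d taking values in {T/Z, (T+1)/Z} on each unit cube of the integer grid (and 0 outside), where Z is the normalizing constant Θ((2T)^{d+1}). Then for any coordinate direction e_i and any κ ∈ (0,1), ∫_{ℝ^d} |f(x + κe_i) − f(x)| dx ≤ C·κ/T for a universal constant C (depending only on d through lower-order factors absorbed into C). -/
/-!
Shifting `x` by `κ eᵢ` changes the cell `⌊x⌋` only when `xᵢ` lies within `κ` below an integer
`n`, and for the density to change the other coordinates must lie in `[-T, T)`. For each of the
`2T - 1` interior values of `n` both points lie in the cube, so the density changes by at most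
`1 / Z` on a slab of volume `κ (2T)^(d-1)`; for `n = ±T` it may jump by up to `(T + 1) / Z`, but
only on two such slabs. As `Z ≥ 2T² (2T)^(d-1)`, the integral is at most
`(2Tκ + 2κ(T + 1)) (2T)^(d-1) / Z ≤ 3κ / T`.
-/

open MeasureTheory Set

/-- `t ∈ crossingSet s κ` iff `t < n ≤ t + κ` for some `n ∈ s`. -/
def crossingSet (s : Finset ℤ) (κ : ℝ) : Set ℝ := ⋃ n ∈ s, Ico ((n : ℝ) - κ) n

section Crossing

variable {s : Finset ℤ} {κ t : ℝ}

lemma measurableSet_crossingSet : MeasurableSet (crossingSet s κ) :=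
  s.measurableSet_biUnion fun _ _ => measurableSet_Ico

lemma volume_crossingSet_le :
    volume (crossingSet s κ) ≤ ENNReal.ofReal (s.card * κ) := by
  calc volume (crossingSet s κ) ≤ ∑ n ∈ s, volume (Ico ((n : ℝ) - κ) n) :=
        measure_biUnion_finset_le _ _
    _ = ENNReal.ofReal (s.card * κ) := by
        simp [Real.volume_Ico, ENNReal.ofReal_mul]

lemma mem_crossingSet {n : ℤ} (hn : n ∈ s) (h₁ : n - κ ≤ t) (h₂ : t < n) :
    t ∈ crossingSet s κ :=
  mem_iUnion₂.mpr ⟨n, hn, h₁, h₂⟩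

lemma mem_crossingSet_Ioo_of_floor_ne {a b : ℤ} (hκ : 0 ≤ κ) (ht : t ∈ Ico (a : ℝ) b)
    (htκ : t + κ ∈ Ico (a : ℝ) b) (hfloor : ⌊t + κ⌋ ≠ ⌊t⌋) :
    t ∈ crossingSet (Finset.Ioo a b) κ := by
  have hlt : ⌊t⌋ < ⌊t + κ⌋ :=
    (Int.floor_le_floor (le_add_of_nonneg_right hκ)).lt_of_ne hfloor.symm
  have ha : a ≤ ⌊t⌋ := Int.le_floor.mpr ht.1
  have hb : ⌊t + κ⌋ < b := Int.floor_lt.mpr htκ.2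
  refine mem_crossingSet (Finset.mem_Ioo.mpr ⟨by omega, hb⟩) ?_ (Int.floor_lt.mp hlt)
  linarith [Int.floor_le (t + κ)]

lemma mem_crossingSet_pair_of_not_iff {a b : ℤ} (hκ : 0 ≤ κ)
    (h : ¬(t ∈ Ico (a : ℝ) b ↔ t + κ ∈ Ico (a : ℝ) b)) :
    t ∈ crossingSet {a, b} κ := by
  simp only [mem_Ico] at h
  by_cases ht : (a : ℝ) ≤ t ∧ t < b
  · exact mem_crossingSet (n := b) (by simp) (by grind) ht.2
  · exact mem_crossingSet (n := a) (by simp) (by grind) (by grind)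

end Crossing

def slab {ι : Type*} [DecidableEq ι] (i : ι) (r : ℝ) (B : Set ℝ) : Set (EuclideanSpace ℝ ι) :=
  WithLp.ofLp ⁻¹' univ.pi (Function.update (fun _ => Ico (-r) r) i B)

section Slab

variable {ι : Type*} [DecidableEq ι] {i : ι} {r : ℝ} {B : Set ℝ}

lemma mem_slab {x : EuclideanSpace ℝ ι} :
    x ∈ slab i r B ↔ x i ∈ B ∧ ∀ j ≠ i, x j ∈ Ico (-r) r := by
  simp only [slab, mem_preimage, mem_univ_pi]
  refine ⟨fun h => ⟨by simpa using h i, fun j hj => by simpa [hj] using h j⟩,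
    fun ⟨hi, hother⟩ j => ?_⟩
  rcases eq_or_ne j i with rfl | hj
  · simpa using hi
  · simpa [hj] using hother j hj

lemma measurableSet_update_Ico (hB : MeasurableSet B) (j : ι) :
    MeasurableSet (Function.update (fun _ => Ico (-r) r) i B j) := by
  rcases eq_or_ne j i with rfl | hj
  · simpa using hB
  · simp [hj]

variable [Fintype ι]

lemma measurableSet_slab (hB : MeasurableSet B) : MeasurableSet (slab i r B) :=
  (MeasurableSet.univ_pi (measurableSet_update_Ico hB)).preimage (WithLp.measurable_ofLp 2 _)

lemma volume_slab (hB : MeasurableSet B) :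
    volume (slab i r B) = volume B * ENNReal.ofReal (2 * r) ^ (Fintype.card ι - 1) := by
  rw [slab, (PiLp.volume_preserving_ofLp ι).measure_preimage
      (MeasurableSet.univ_pi (measurableSet_update_Ico hB)).nullMeasurableSet, volume_pi_pi,
    Finset.prod_eq_mul_prod_sdiff_singleton_of_mem (Finset.mem_univ i),
    Finset.prod_congr rfl (g := fun _ => volume (Ico (-r) r)) fun j hj => by
      rw [Function.update_of_ne (by simpa using hj)]]
  simp [Real.volume_Ico, two_mul, Finset.card_sdiff_of_subset]

end Slab

lemma volume_slab_crossingSet_le {ι : Type*} [Fintype ι] [DecidableEq ι] (i : ι) {r : ℝ}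
    (hr : 0 ≤ r) (s : Finset ℤ) {κ : ℝ} (hκ : 0 ≤ κ) :
    volume (slab i r (crossingSet s κ)) ≤
      ENNReal.ofReal (s.card * κ * (2 * r) ^ (Fintype.card ι - 1)) := by
  rw [volume_slab measurableSet_crossingSet, ENNReal.ofReal_mul (by positivity : 0 ≤ s.card * κ),
    ENNReal.ofReal_pow (by positivity)]
  gcongr
  exact volume_crossingSet_le

def halfOpenCube {ι : Type*} (r : ℝ) : Set (EuclideanSpace ℝ ι) := {x | ∀ j, x j ∈ Ico (-r) r}

lemma mem_halfOpenCube_iff_of_forall_ne {ι : Type*} {r : ℝ} {i : ι} {x : EuclideanSpace ℝ ι}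
    (h : ∀ j ≠ i, x j ∈ Ico (-r) r) : x ∈ halfOpenCube r ↔ x i ∈ Ico (-r) r := by
  refine ⟨fun hx => hx i, fun hi j => ?_⟩
  rcases eq_or_ne j i with rfl | hj
  exacts [hi, h j hj]

lemma floor_bounds_iff_mem_Ico {t : ℝ} {a b : ℤ} :
    (a ≤ ⌊t⌋ ∧ ⌊t⌋ ≤ b - 1) ↔ t ∈ Ico (a : ℝ) b := by
  rw [Int.le_floor, Int.le_sub_one_iff, Int.floor_lt, mem_Ico]

structure IsGridDensity {ι : Type*} (T : ℕ) (z : (ι → ℤ) → ℤ) (Z : ℝ)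
    (f : EuclideanSpace ℝ ι → ℝ) : Prop where
  eq_of_mem : ∀ x ∈ halfOpenCube T, f x = (T + z fun j => ⌊x j⌋) / Z
  eq_zero_of_notMem : ∀ x ∉ halfOpenCube T, f x = 0

namespace IsGridDensity

variable {ι : Type*} {T : ℕ} {z : (ι → ℤ) → ℤ} {Z : ℝ} {f : EuclideanSpace ℝ ι → ℝ}

lemma of_floor
    (hf : ∀ x, (∀ j, -(T : ℤ) ≤ ⌊x j⌋ ∧ ⌊x j⌋ ≤ (T : ℤ) - 1) → f x = (T + z fun j => ⌊x j⌋) / Z)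
    (hf₀ : ∀ x, ¬(∀ j, -(T : ℤ) ≤ ⌊x j⌋ ∧ ⌊x j⌋ ≤ (T : ℤ) - 1) → f x = 0) :
    IsGridDensity T z Z f := by
  have hcube : ∀ x : EuclideanSpace ℝ ι,
      (∀ j, -(T : ℤ) ≤ ⌊x j⌋ ∧ ⌊x j⌋ ≤ (T : ℤ) - 1) ↔ x ∈ halfOpenCube T := fun x => by
    simp only [floor_bounds_iff_mem_Ico, halfOpenCube, mem_ofPred_eq]; push_cast; rfl
  exact ⟨fun x hx => hf x ((hcube x).mpr hx), fun x hx => hf₀ x (mt (hcube x).mp hx)⟩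

lemma mem_Icc (hf : IsGridDensity T z Z f) (hz : ∀ a, z a = 0 ∨ z a = 1) (hZ : 0 < Z)
    (x : EuclideanSpace ℝ ι) : f x ∈ Icc 0 ((T + 1) / Z) := by
  by_cases hx : x ∈ halfOpenCube T
  · rw [hf.eq_of_mem x hx]
    rcases hz fun j => ⌊x j⌋ with h | h <;> rw [h] <;> push_cast <;>
      exact ⟨by positivity, div_le_div_of_nonneg_right (by linarith) hZ.le⟩
  · rw [hf.eq_zero_of_notMem x hx]
    exact ⟨le_rfl, by positivity⟩

lemma abs_sub_le (hf : IsGridDensity T z Z f) (hz : ∀ a, z a = 0 ∨ z a = 1) (hZ : 0 < Z)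
    {x y : EuclideanSpace ℝ ι} (hx : x ∈ halfOpenCube T) (hy : y ∈ halfOpenCube T) :
    |f y - f x| ≤ 1 / Z := by
  rw [hf.eq_of_mem x hx, hf.eq_of_mem y hy, ← sub_div, abs_div, abs_of_pos hZ,
    add_sub_add_left_eq_sub]
  refine div_le_div_of_nonneg_right ?_ hZ.le
  rcases hz fun j => ⌊x j⌋ with h | h <;> rcases hz fun j => ⌊y j⌋ with h' | h' <;> simp [h, h']

variable [DecidableEq ι] {κ : ℝ} {i : ι}

lemma abs_sub_le_of_transverse_mem (hf : IsGridDensity T z Z f)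
    (hz : ∀ a, z a = 0 ∨ z a = 1) (hZ : 0 < Z) (hκ : 0 ≤ κ) {x y : EuclideanSpace ℝ ι}
    (hy_ne : ∀ j ≠ i, y j = x j) (hy_i : y i = x i + κ)
    (hother : ∀ j ≠ i, x j ∈ Ico (-(T : ℝ)) T) :
    |f y - f x| ≤
      (slab i T (crossingSet (Finset.Ioo (-(T : ℤ)) T) κ)).indicator (fun _ => 1 / Z) x +
        (slab i T (crossingSet {-(T : ℤ), (T : ℤ)} κ)).indicator (fun _ => (T + 1) / Z) x := by
  have h₁ : 0 ≤ (slab i T (crossingSet (Finset.Ioo (-(T : ℤ)) T) κ)).indicator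
      (fun _ => 1 / Z) x := indicator_nonneg (fun _ _ => by positivity) x
  have h₂ : 0 ≤ (slab i T (crossingSet {-(T : ℤ), (T : ℤ)} κ)).indicator
      (fun _ => (T + 1) / Z) x := indicator_nonneg (fun _ _ => by positivity) x
  have hx : x ∈ halfOpenCube T ↔ x i ∈ Ico (-(T : ℝ)) T :=
    mem_halfOpenCube_iff_of_forall_ne hother
  have hy : y ∈ halfOpenCube T ↔ x i + κ ∈ Ico (-(T : ℝ)) T := by
    rw [← hy_i]; exact mem_halfOpenCube_iff_of_forall_ne fun j hj => hy_ne j hj ▸ hother j hj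
  by_cases hxc : x ∈ halfOpenCube T <;> by_cases hyc : y ∈ halfOpenCube T
  · by_cases hfloor : ⌊x i + κ⌋ = ⌊x i⌋
    · have hfloors : (fun j => ⌊y j⌋) = fun j => ⌊x j⌋ := by
        funext j
        rcases eq_or_ne j i with rfl | hj
        exacts [hy_i ▸ hfloor, by rw [hy_ne j hj]]
      rw [hf.eq_of_mem x hxc, hf.eq_of_mem y hyc, hfloors, sub_self, abs_zero]
      positivity
    · have hmem : x ∈ slab i T (crossingSet (Finset.Ioo (-(T : ℤ)) T) κ) := by
        refine mem_slab.mpr ⟨mem_crossingSet_Ioo_of_floor_ne hκ ?_ ?_ hfloor, hother⟩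
        · push_cast; exact hx.mp hxc
        · push_cast; exact hy.mp hyc
      rw [indicator_of_mem hmem]
      linarith [hf.abs_sub_le hz hZ hxc hyc]
  rotate_left 2
  · rw [hf.eq_zero_of_notMem x hxc, hf.eq_zero_of_notMem y hyc, sub_self, abs_zero]
    positivity
  all_goals
    have hmem : x ∈ slab i T (crossingSet {-(T : ℤ), (T : ℤ)} κ) := by
      refine mem_slab.mpr ⟨mem_crossingSet_pair_of_not_iff hκ ?_, hother⟩
      push_cast
      rw [← hx, ← hy]
      tauto
    rw [indicator_of_mem hmem, abs_sub_le_iff]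
    obtain ⟨hfx₀, hfx₁⟩ := hf.mem_Icc hz hZ x
    obtain ⟨hfy₀, hfy₁⟩ := hf.mem_Icc hz hZ y
    constructor <;> linarith

lemma abs_shift_sub_le (hf : IsGridDensity T z Z f) (hz : ∀ a, z a = 0 ∨ z a = 1)
    (hZ : 0 < Z) (hκ : 0 ≤ κ) (x : EuclideanSpace ℝ ι) :
    |f (x + κ • EuclideanSpace.single i 1) - f x| ≤
      (slab i T (crossingSet (Finset.Ioo (-(T : ℤ)) T) κ)).indicator (fun _ => 1 / Z) x +
        (slab i T (crossingSet {-(T : ℤ), (T : ℤ)} κ)).indicator (fun _ => (T + 1) / Z) x := by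
  set y := x + κ • EuclideanSpace.single i 1
  have hy_ne : ∀ j ≠ i, y j = x j := fun j hj => by simp [y, hj]
  by_cases hother : ∀ j ≠ i, x j ∈ Ico (-(T : ℝ)) T
  · exact hf.abs_sub_le_of_transverse_mem hz hZ hκ hy_ne (by simp [y]) hother
  push Not at hother
  obtain ⟨j, hj, hxj⟩ := hother
  rw [hf.eq_zero_of_notMem x fun h => hxj (h j),
    hf.eq_zero_of_notMem y fun h => hxj (hy_ne j hj ▸ h j), sub_self, abs_zero]
  exact add_nonneg (indicator_nonneg (fun _ _ => by positivity) x)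
    (indicator_nonneg (fun _ _ => by positivity) x)

end IsGridDensity

lemma integral_le_of_le_indicator_add {α : Type*} [MeasurableSpace α] {μ : Measure α}
    {g : α → ℝ} {S₁ S₂ : Set α} {c₁ c₂ v₁ v₂ : ℝ} (hS₁ : MeasurableSet S₁)
    (hS₂ : MeasurableSet S₂) (hc₁ : 0 ≤ c₁) (hc₂ : 0 ≤ c₂) (hv₁ : 0 ≤ v₁) (hv₂ : 0 ≤ v₂)
    (hμS₁ : μ S₁ ≤ ENNReal.ofReal v₁) (hμS₂ : μ S₂ ≤ ENNReal.ofReal v₂) (hg₀ : ∀ x, 0 ≤ g x)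
    (hg : ∀ x, g x ≤ S₁.indicator (fun _ => c₁) x + S₂.indicator (fun _ => c₂) x) :
    ∫ x, g x ∂μ ≤ v₁ * c₁ + v₂ * c₂ := by
  have hint₁ : Integrable (S₁.indicator fun _ => c₁) μ := (integrable_indicator_iff hS₁).mpr
    (integrableOn_const (hμS₁.trans_lt ENNReal.ofReal_lt_top).ne)
  have hint₂ : Integrable (S₂.indicator fun _ => c₂) μ := (integrable_indicator_iff hS₂).mpr
    (integrableOn_const (hμS₂.trans_lt ENNReal.ofReal_lt_top).ne)
  calc ∫ x, g x ∂μ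
      ≤ ∫ x, (S₁.indicator (fun _ => c₁) x + S₂.indicator (fun _ => c₂) x) ∂μ :=
        integral_mono_of_nonneg (.of_forall hg₀) (hint₁.add hint₂) (.of_forall hg)
    _ = μ.real S₁ * c₁ + μ.real S₂ * c₂ := by
        rw [integral_add hint₁ hint₂, integral_indicator_const _ hS₁,
          integral_indicator_const _ hS₂, smul_eq_mul, smul_eq_mul]
    _ ≤ v₁ * c₁ + v₂ * c₂ := by
        gcongr
        exacts [ENNReal.toReal_le_of_le_ofReal hv₁ hμS₁, ENNReal.toReal_le_of_le_ofReal hv₂ hμS₂]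

theorem grid_density_coordinate_shift_general
    (d : ℕ) :
    ∃ C > (0:ℝ), ∀ (T : ℕ), 1 ≤ T →
      ∀ (z : (Fin d → ℤ) → ℤ), (∀ a, z a = 0 ∨ z a = 1) →
      ∀ (Z : ℝ), (T : ℝ) * (2 * T) ^ d ≤ Z → Z ≤ ((T : ℝ) + 1) * (2 * T) ^ d →
      ∀ (f : EuclideanSpace ℝ (Fin d) → ℝ),
        (∀ x, (∀ j, -(T:ℤ) ≤ ⌊x j⌋ ∧ ⌊x j⌋ ≤ (T:ℤ) - 1) →
          f x = ((T : ℝ) + (z fun j => ⌊x j⌋)) / Z) →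
        (∀ x, ¬(∀ j, -(T:ℤ) ≤ ⌊x j⌋ ∧ ⌊x j⌋ ≤ (T:ℤ) - 1) → f x = 0) →
      ∀ (i : Fin d) (κ : ℝ), 0 < κ → κ < 1 →
        ∫ x, |f (x + κ • EuclideanSpace.single i (1:ℝ)) - f x| ≤ C * κ / T := by
  refine ⟨3, by norm_num, fun T hT z hz Z hZT _ f hf hf₀ i κ hκ _ => ?_⟩
  have hgrid : IsGridDensity T z Z f := .of_floor hf hf₀
  have hT₁ : (1 : ℝ) ≤ T := by exact_mod_cast hT
  set P := (2 * (T : ℝ)) ^ (d - 1)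
  have hP : 0 < P := by positivity
  have hZP : 2 * T ^ 2 * P ≤ Z := by
    rw [← Nat.sub_add_cancel i.pos, pow_succ] at hZT
    linarith
  have hZ : 0 < Z := lt_of_lt_of_le (by positivity) hZP
  have hcard₁ : ((Finset.Ioo (-(T : ℤ)) T).card : ℝ) ≤ 2 * T := by
    rw [Int.card_Ioo]; norm_cast; omega
  have hcard₂ : (({-(T : ℤ), (T : ℤ)} : Finset ℤ).card : ℝ) ≤ 2 := by
    exact_mod_cast Finset.card_le_two
  calc ∫ x, |f (x + κ • EuclideanSpace.single i (1:ℝ)) - f x|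
      ≤ 2 * T * κ * P * (1 / Z) + 2 * κ * P * ((T + 1) / Z) := by
        refine integral_le_of_le_indicator_add (measurableSet_slab measurableSet_crossingSet)
          (measurableSet_slab measurableSet_crossingSet) (by positivity) (by positivity)
          (by positivity) (by positivity) ?_ ?_ (fun _ => abs_nonneg _)
          (hgrid.abs_shift_sub_le hz hZ hκ.le)
        all_goals
          refine (volume_slab_crossingSet_le i (by positivity) _ hκ.le).trans
            (ENNReal.ofReal_le_ofReal ?_)
          simp only [Fintype.card_fin, P]
          gcongr
    _ = (2 * T * κ * P + 2 * κ * P * (T + 1)) / Z := by ring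
    _ ≤ 3 * κ / T := by
        rw [div_le_div_iff₀ hZ (by positivity)]
        nlinarith [mul_le_mul_of_nonneg_left hZP (by positivity : (0 : ℝ) ≤ 3 * κ),
          mul_nonneg (mul_nonneg hκ.le hP.le) (by linarith : (0 : ℝ) ≤ T - 1)]

/-- Coordinate shift-invariance of the grid density in the lower bound
construction: shifting by `κ` along a coordinate axis changes the density by
at most `C·κ/T` in L¹. -/
theorem grid_density_coordinate_shift
    (d : ℕ) (hd : 0 < d) :
    ∃ C > (0:ℝ), ∀ (T : ℕ), 1 ≤ T →
      ∀ (z : (Fin d → ℤ) → ℤ), (∀ a, z a = 0 ∨ z a = 1) →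
      ∀ (Z : ℝ), (T : ℝ) * (2 * T) ^ d ≤ Z → Z ≤ ((T : ℝ) + 1) * (2 * T) ^ d →
      ∀ (f : EuclideanSpace ℝ (Fin d) → ℝ),
        (∀ x, (∀ j, -(T:ℤ) ≤ ⌊x j⌋ ∧ ⌊x j⌋ ≤ (T:ℤ) - 1) →
          f x = ((T : ℝ) + (z fun j => ⌊x j⌋)) / Z) →
        (∀ x, ¬(∀ j, -(T:ℤ) ≤ ⌊x j⌋ ∧ ⌊x j⌋ ≤ (T:ℤ) - 1) → f x = 0) →
      ∀ (i : Fin d) (κ : ℝ), 0 < κ → κ < 1 →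
        ∫ x, |f (x + κ • EuclideanSpace.single i (1:ℝ)) - f x| ≤ C * κ / T :=
  grid_density_coordinate_shift_general d
end
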